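/- arXiv:1406.2649 — 3 statements merged into one kernel-verified Lean document; each statement's English description precedes it below -/
import Mathlib

section
/- The operator [∂_r]^{-1} defined by ([∂_r]^{-1}f)(r) = -∫_r^∞ f(s) ds maps L^1((0,∞), r dr) boundedly into L^2((0,∞), r dr): there is a universal constant C with ‖∫_r^∞ f(s) ds‖_{L^2(r dr)} ≤ C ‖f‖_{L^1(r dr)}. -/
open MeasureTheory Set
open scoped ENNReal NNReal

/-- The measure `r dr` on `(0, ∞)` (radial functions on `ℝ²`). -/
noncomputable def rdr : Measure ℝ :=
  (volume.restrict (Ioi (0:ℝ))).withDensity (fun r => ENNReal.ofReal r)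

/-!
Put `G r = ∫_r^∞ |f|`. Since `s > r` on the range of integration, `r G(r) ≤ ∫_0^∞ s |f(s)| ds = ‖f‖₁`
for `r > 0`, and by Tonelli `∫_0^∞ G(r) dr = ‖f‖₁` as well. Hence
`∫ r G(r)² dr ≤ ‖f‖₁ ∫ G(r) dr = ‖f‖₁²`, and the bound holds with `C = 1`.
-/

theorem lintegral_rdr (g : ℝ → ℝ≥0∞) :
    ∫⁻ r, g r ∂rdr = ∫⁻ r in Ioi 0, ENNReal.ofReal r * g r :=
  lintegral_withDensity_eq_lintegral_mul_non_measurable _ ENNReal.measurable_ofReal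
    (ae_of_all _ fun _ => ENNReal.ofReal_lt_top) g

theorem lintegral_Ioi_lintegral_Ioi {h : ℝ → ℝ≥0∞} (hh : Measurable h) (a : ℝ) :
    ∫⁻ r in Ioi a, ∫⁻ s in Ioi r, h s = ∫⁻ s in Ioi a, ENNReal.ofReal (s - a) * h s := by
  have hK : Measurable fun p : ℝ × ℝ => {q : ℝ × ℝ | q.1 < q.2}.indicator (fun q => h q.2) p :=
    (hh.comp measurable_snd).indicator (measurableSet_lt measurable_fst measurable_snd)
  calc ∫⁻ r in Ioi a, ∫⁻ s in Ioi r, h s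
      = ∫⁻ r in Ioi a, ∫⁻ s, {q : ℝ × ℝ | q.1 < q.2}.indicator (fun q => h q.2) (r, s) := by
        refine lintegral_congr fun r => ?_
        rw [← lintegral_indicator measurableSet_Ioi]
        rfl
    _ = ∫⁻ s, ∫⁻ r in Ioi a, {q : ℝ × ℝ | q.1 < q.2}.indicator (fun q => h q.2) (r, s) :=
        lintegral_lintegral_swap hK.aemeasurable
    _ = ∫⁻ s, (Ioi a).indicator (fun s => ENNReal.ofReal (s - a) * h s) s := by
        refine lintegral_congr fun s => ?_
        have : ∀ r, {q : ℝ × ℝ | q.1 < q.2}.indicator (fun q => h q.2) (r, s)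
            = (Iio s).indicator (fun _ => h s) r := fun r => rfl
        rw [lintegral_congr this, lintegral_indicator_const measurableSet_Iio,
          Measure.restrict_apply measurableSet_Iio, Iio_inter_Ioi, Real.volume_Ioo, mul_comm]
        by_cases hs : s ∈ Ioi a
        · rw [indicator_of_mem hs]
        · rw [indicator_of_notMem hs, ENNReal.ofReal_of_nonpos (sub_nonpos.2 (not_lt.1 hs)),
            zero_mul]
    _ = ∫⁻ s in Ioi a, ENNReal.ofReal (s - a) * h s := lintegral_indicator measurableSet_Ioi _

theorem ofReal_mul_lintegral_Ioi_le (h : ℝ → ℝ≥0∞) (r : ℝ) :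
    ENNReal.ofReal r * ∫⁻ s in Ioi r, h s ≤ ∫⁻ s in Ioi r, ENNReal.ofReal s * h s :=
  (lintegral_const_mul_le _ _).trans <| setLIntegral_mono' measurableSet_Ioi fun _ hs =>
    mul_le_mul_left (ENNReal.ofReal_le_ofReal (le_of_lt hs)) _

theorem lintegral_rdr_sq_lintegral_Ioi_le {h : ℝ → ℝ≥0∞} (hh : Measurable h) :
    ∫⁻ r, (∫⁻ s in Ioi r, h s) ^ 2 ∂rdr ≤ (∫⁻ s, h s ∂rdr) ^ 2 := by
  set G : ℝ → ℝ≥0∞ := fun r => ∫⁻ s in Ioi r, h s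
  set A := ∫⁻ s in Ioi 0, ENNReal.ofReal s * h s
  have hG : Measurable G := Antitone.measurable fun a b hab =>
    lintegral_mono_set (Ioi_subset_Ioi hab)
  have hrG : ∀ r ∈ Ioi (0 : ℝ), ENNReal.ofReal r * G r ≤ A := fun r hr =>
    (ofReal_mul_lintegral_Ioi_le h r).trans (lintegral_mono_set (Ioi_subset_Ioi (le_of_lt hr)))
  rw [lintegral_rdr, lintegral_rdr]
  calc ∫⁻ r in Ioi 0, ENNReal.ofReal r * G r ^ 2
      ≤ ∫⁻ r in Ioi 0, A * G r := setLIntegral_mono' measurableSet_Ioi fun r hr => by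
        rw [sq, ← mul_assoc]
        exact mul_le_mul_left (hrG r hr) _
    _ = A * ∫⁻ r in Ioi 0, G r := lintegral_const_mul _ hG
    _ = A ^ 2 := by simp only [G, lintegral_Ioi_lintegral_Ioi hh, sub_zero, A, sq]

theorem eLpNorm_two_le_eLpNorm_one_of_lintegral_sq_le {α ε ε' : Type*} [MeasurableSpace α]
    {μ : Measure α} [ENorm ε] [ENorm ε'] {g : α → ε} {f : α → ε'}
    (h : ∫⁻ x, ‖g x‖ₑ ^ 2 ∂μ ≤ (∫⁻ x, ‖f x‖ₑ ∂μ) ^ 2) :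
    eLpNorm g 2 μ ≤ eLpNorm f 1 μ := by
  have hg := eLpNorm_nnreal_pow_eq_lintegral (f := g) (μ := μ) (p := 2) two_ne_zero
  rw [eLpNorm_one_eq_lintegral_enorm, ← ENNReal.rpow_le_rpow_iff (z := 2) two_pos]
  push_cast at hg
  rw [hg]
  exact_mod_cast h

/-- The operator `[∂_r]⁻¹ f (r) = -∫_r^∞ f(s) ds` maps `L¹((0,∞), r dr)` boundedly into
`L²((0,∞), r dr)`. -/
theorem L1_to_L2_antideriv_bound :
    ∃ C : ℝ≥0∞, C ≠ ⊤ ∧ ∀ f : ℝ → ℂ, Measurable f →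
      eLpNorm (fun r => -∫ s in Ioi r, f s) 2 rdr ≤ C * eLpNorm f 1 rdr := by
  refine ⟨1, ENNReal.one_ne_top, fun f hf => ?_⟩
  rw [one_mul]
  calc eLpNorm (fun r => -∫ s in Ioi r, f s) 2 rdr
      ≤ eLpNorm (fun r => ∫⁻ s in Ioi r, ‖f s‖ₑ) 2 rdr := eLpNorm_mono_enorm fun r => by
        simpa only [enorm_neg, enorm_eq_self] using enorm_integral_le_lintegral_enorm _
    _ ≤ eLpNorm f 1 rdr := eLpNorm_two_le_eLpNorm_one_of_lintegral_sq_le <| by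
        simpa only [enorm_eq_self] using lintegral_rdr_sq_lintegral_Ioi_le hf.enorm
end

section
/- With A_0(r) = (1/2)∫_r^∞ ρ(s)(∫_0^s ρ(u) u du) ds/s, there is a universal constant C such that ‖A_0‖_{L^∞} ≤ C ‖ρ‖_{L^2(ℝ²)}², where the norm is the L² norm of the radial function ρ on ℝ². -/
open MeasureTheory Set
open scoped ENNReal NNReal

/-!
For `0 < u ≤ s`, AM–GM gives `2 ρ(s) ρ(u) u / s ≤ (ρ(u) u / s)² + ρ(s)²`. Integrating over
`0 < u ≤ s`, the second term contributes `∫ ρ(s)² s ds`, and so does the first after exchanging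
the order of integration, because `∫_u^∞ s⁻² ds = u⁻¹`. Hence
`|A_0(r)| ≤ ½ ∫_0^∞ |ρ(s)| (∫_0^s |ρ(u)| u du) ds / s ≤ ½ ∫_0^∞ ρ(s)² s ds`, i.e. `C = 1/2`.
-/

theorem ENNReal.two_mul_le_add_sq (a b : ℝ≥0∞) : 2 * a * b ≤ a ^ 2 + b ^ 2 := by
  rcases eq_or_ne a ⊤ with rfl | ha
  · simp
  rcases eq_or_ne b ⊤ with rfl | hb
  · simp
  lift a to ℝ≥0 using ha
  lift b to ℝ≥0 using hb
  exact_mod_cast _root_.two_mul_le_add_sq a b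

theorem eLpNorm_two_rdr_sq {ε : Type*} [ENorm ε] (f : ℝ → ε) :
    eLpNorm f 2 rdr ^ 2 = ∫⁻ u in Ioi 0, ‖f u‖ₑ ^ 2 * ENNReal.ofReal u := by
  have h := eLpNorm_nnreal_pow_eq_lintegral (f := f) (μ := rdr) (p := 2) two_ne_zero
  simp only [NNReal.coe_ofNat, ENNReal.coe_ofNat, ENNReal.rpow_two] at h
  rw [h, rdr, lintegral_withDensity_eq_lintegral_mul_non_measurable _ ENNReal.measurable_ofReal
    (.of_forall fun _ => ENNReal.ofReal_lt_top)]
  simp only [Pi.mul_apply, mul_comm]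

theorem lintegral_Ioi_lintegral_Ioc_swap (μ : Measure ℝ) [SFinite μ]
    (a : ℝ) {F : ℝ → ℝ → ℝ≥0∞} (hF : Measurable (Function.uncurry F)) :
    ∫⁻ s in Ioi a, ∫⁻ u in Ioc a s, F s u ∂μ ∂μ = ∫⁻ u in Ioi a, ∫⁻ s in Ici u, F s u ∂μ ∂μ := by
  set T := {p : ℝ × ℝ | p.2 ≤ p.1}
  have hT : MeasurableSet T := measurableSet_le measurable_snd measurable_fst
  calc ∫⁻ s in Ioi a, ∫⁻ u in Ioc a s, F s u ∂μ ∂μ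
      = ∫⁻ s in Ioi a, ∫⁻ u in Ioi a, T.indicator (Function.uncurry F) (s, u) ∂μ ∂μ := by
        refine lintegral_congr fun s => ?_
        rw [← Ioi_inter_Iic, inter_comm, ← setLIntegral_indicator measurableSet_Iic]
        rfl
    _ = ∫⁻ u in Ioi a, ∫⁻ s in Ioi a, T.indicator (Function.uncurry F) (s, u) ∂μ ∂μ :=
        lintegral_lintegral_swap (hF.indicator hT).aemeasurable
    _ = ∫⁻ u in Ioi a, ∫⁻ s in Ici u, F s u ∂μ ∂μ := by
        refine setLIntegral_congr_fun measurableSet_Ioi fun u hu => ?_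
        rw [← inter_eq_left.2 (Ici_subset_Ioi.2 hu), ← setLIntegral_indicator measurableSet_Ici]
        rfl

theorem lintegral_Ici_inv_sq {u : ℝ} (hu : 0 < u) :
    ∫⁻ s in Ici u, (ENNReal.ofReal s ^ 2)⁻¹ = (ENNReal.ofReal u)⁻¹ := by
  have hpow : IntegrableOn (fun s : ℝ => s ^ (-2 : ℝ)) (Ioi u) :=
    integrableOn_Ioi_rpow_of_lt (by norm_num) hu
  calc ∫⁻ s in Ici u, (ENNReal.ofReal s ^ 2)⁻¹
      = ∫⁻ s in Ioi u, ENNReal.ofReal (s ^ (-2 : ℝ)) := by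
        rw [← restrict_Ioi_eq_restrict_Ici]
        refine setLIntegral_congr_fun measurableSet_Ioi fun s hs => ?_
        have hs : 0 < s := hu.trans hs
        rw [Real.rpow_neg hs.le, ← ENNReal.ofReal_pow hs.le,
          ENNReal.ofReal_inv_of_pos (by positivity)]
        norm_cast
    _ = ENNReal.ofReal (∫ s in Ioi u, s ^ (-2 : ℝ)) :=
        (ofReal_integral_eq_lintegral_ofReal hpow <| ae_restrict_of_forall_mem measurableSet_Ioi
          fun s hs => Real.rpow_nonneg (hu.trans hs).le _).symm
    _ = (ENNReal.ofReal u)⁻¹ := by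
        rw [integral_Ioi_rpow_of_lt (by norm_num) hu, ← ENNReal.ofReal_inv_of_pos hu]
        norm_num [Real.rpow_neg_one]

theorem lintegral_Ioi_lintegral_Ioc_div_sq {g : ℝ → ℝ≥0∞} (hg : Measurable g) :
    ∫⁻ s in Ioi 0, ∫⁻ u in Ioc 0 s, g u / ENNReal.ofReal s ^ 2 =
      ∫⁻ u in Ioi 0, g u / ENNReal.ofReal u := by
  rw [lintegral_Ioi_lintegral_Ioc_swap _ _ (by fun_prop)]
  refine setLIntegral_congr_fun measurableSet_Ioi fun u hu => ?_
  simp only [div_eq_mul_inv]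
  rw [lintegral_const_mul _ (by fun_prop), lintegral_Ici_inv_sq hu]

theorem lintegral_mul_lintegral_Ioc_div_le {f : ℝ → ℝ≥0∞} (hf : Measurable f) :
    ∫⁻ s in Ioi 0, f s * (∫⁻ u in Ioc 0 s, f u * ENNReal.ofReal u) / ENNReal.ofReal s ≤
      ∫⁻ u in Ioi 0, f u ^ 2 * ENNReal.ofReal u := by
  set w : ℝ → ℝ≥0∞ := fun s => ENNReal.ofReal s
  set N := ∫⁻ u in Ioi 0, f u ^ 2 * w u
  have amgm (s u : ℝ) : 2 * (f s / w s) * (f u * w u) ≤ (f u * w u) ^ 2 / w s ^ 2 + f s ^ 2 := by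
    calc 2 * (f s / w s) * (f u * w u) = 2 * (f u * w u / w s) * f s := by
          simp only [div_eq_mul_inv]; ring
      _ ≤ (f u * w u / w s) ^ 2 + f s ^ 2 := ENNReal.two_mul_le_add_sq _ _
      _ = (f u * w u) ^ 2 / w s ^ 2 + f s ^ 2 := by
          simp only [div_eq_mul_inv, mul_pow, ENNReal.inv_pow]
  have hardy : ∫⁻ s in Ioi 0, ∫⁻ u in Ioc 0 s, (f u * w u) ^ 2 / w s ^ 2 = N := by
    rw [lintegral_Ioi_lintegral_Ioc_div_sq (by fun_prop)]
    refine setLIntegral_congr_fun measurableSet_Ioi fun u (hu : 0 < u) => ?_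
    rw [mul_pow, sq (w u), ← mul_assoc, ENNReal.mul_div_cancel_right
      (ENNReal.ofReal_pos.2 hu).ne' ENNReal.ofReal_ne_top]
  refine (ENNReal.mul_le_mul_iff_right two_ne_zero ENNReal.ofNat_ne_top).1 ?_
  calc 2 * ∫⁻ s in Ioi 0, f s * (∫⁻ u in Ioc 0 s, f u * w u) / w s
      = ∫⁻ s in Ioi 0, ∫⁻ u in Ioc 0 s, 2 * (f s / w s) * (f u * w u) := by
        rw [← lintegral_const_mul' _ _ ENNReal.ofNat_ne_top]
        refine lintegral_congr fun s => ?_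
        rw [lintegral_const_mul _ (by fun_prop)]
        simp only [div_eq_mul_inv]; ring
    _ ≤ ∫⁻ s in Ioi 0, ∫⁻ u in Ioc 0 s, ((f u * w u) ^ 2 / w s ^ 2 + f s ^ 2) :=
        lintegral_mono fun s => lintegral_mono fun u => amgm s u
    _ = 2 * N := by
        simp_rw [lintegral_add_right _ measurable_const, setLIntegral_const, Real.volume_Ioc,
          sub_zero]
        rw [lintegral_add_right _ (by fun_prop), hardy, two_mul]

theorem enorm_setIntegral_Ioi_le {ρ : ℝ → ℝ} {r : ℝ} (hr : 0 ≤ r) :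
    ‖∫ s in Ioi r, ρ s * (∫ u in Ioc 0 s, ρ u * u) / s‖ₑ ≤
      ∫⁻ s in Ioi 0, ‖ρ s‖ₑ * (∫⁻ u in Ioc 0 s, ‖ρ u‖ₑ * ENNReal.ofReal u) / ENNReal.ofReal s := by
  have inner (s : ℝ) :
      ‖∫ u in Ioc 0 s, ρ u * u‖ₑ ≤ ∫⁻ u in Ioc 0 s, ‖ρ u‖ₑ * ENNReal.ofReal u := by
    refine (enorm_integral_le_lintegral_enorm _).trans_eq ?_
    refine setLIntegral_congr_fun measurableSet_Ioc fun u hu => ?_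
    rw [enorm_mul, Real.enorm_of_nonneg hu.1.le]
  calc ‖∫ s in Ioi r, ρ s * (∫ u in Ioc 0 s, ρ u * u) / s‖ₑ
      ≤ ∫⁻ s in Ioi r, ‖ρ s * (∫ u in Ioc 0 s, ρ u * u) / s‖ₑ :=
        enorm_integral_le_lintegral_enorm _
    _ ≤ ∫⁻ s in Ioi r, ‖ρ s‖ₑ * (∫⁻ u in Ioc 0 s, ‖ρ u‖ₑ * ENNReal.ofReal u) /
          ENNReal.ofReal s := by
        refine setLIntegral_mono' measurableSet_Ioi fun s (hs : r < s) => ?_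
        have hs : 0 < s := hr.trans_lt hs
        simp only [div_eq_mul_inv]
        rw [enorm_mul, enorm_mul, enorm_inv hs.ne', Real.enorm_of_nonneg hs.le]
        gcongr
        exact inner s
    _ ≤ _ := lintegral_mono_set (Ioi_subset_Ioi hr)

/-- With `A_0(r) = (1/2)∫_r^∞ ρ(s)(∫_0^s ρ(u) u du) ds/s` for nonnegative `ρ`, there is a
universal constant `C` with `‖A_0‖_{L^∞} ≤ C ‖ρ‖_{L²(ℝ²)}²`. -/
theorem Azero_Linfty_bound :
    ∃ C : ℝ≥0∞, C ≠ ⊤ ∧ ∀ ρ : ℝ → ℝ, Measurable ρ → (∀ s, 0 ≤ ρ s) → ∀ r : ℝ, 0 < r →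
      ENNReal.ofReal |(1/2 : ℝ) * ∫ s in Ioi r, ρ s * (∫ u in Ioc (0:ℝ) s, ρ u * u) / s|
        ≤ C * (eLpNorm ρ 2 rdr)^2 := by
  refine ⟨2⁻¹, by simp, fun ρ hρ _ r hr => ?_⟩
  have half : ‖(1 / 2 : ℝ)‖ₑ = 2⁻¹ := by
    rw [Real.enorm_of_nonneg (by norm_num), one_div, ENNReal.ofReal_inv_of_pos two_pos,
      ENNReal.ofReal_ofNat]
  rw [eLpNorm_two_rdr_sq, ← Real.enorm_eq_ofReal_abs, enorm_mul, half]
  calc 2⁻¹ * ‖∫ s in Ioi r, ρ s * (∫ u in Ioc 0 s, ρ u * u) / s‖ₑ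
      ≤ 2⁻¹ * ∫⁻ s in Ioi 0, ‖ρ s‖ₑ * (∫⁻ u in Ioc 0 s, ‖ρ u‖ₑ * ENNReal.ofReal u) /
          ENNReal.ofReal s := by
        gcongr
        exact enorm_setIntegral_Ioi_le hr.le
    _ ≤ 2⁻¹ * ∫⁻ u in Ioi 0, ‖ρ u‖ₑ ^ 2 * ENNReal.ofReal u := by
        gcongr 2⁻¹ * ?_
        exact lintegral_mul_lintegral_Ioc_div_le hρ.enorm
end

section
/- With A_θ(r) = -(1/2)∫_0^r ρ(s) s ds, for 1 < p ≤ ∞ there is a constant C_p such that ‖A_θ(r)²/r²‖_{L^p(ℝ²)} ≤ C_p ‖ρ‖_{L^1(ℝ²)} ‖ρ‖_{L^p(ℝ²)}, and moreover ‖A_θ(r)²/r²‖_{L^∞} ≤ C ‖ρ‖_{L^2(ℝ²)}² for a universal constant C. -/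
open MeasureTheory Set
open scoped ENNReal NNReal

theorem setLIntegral_rdr {s : Set ℝ} (hs : MeasurableSet s) (hsub : s ⊆ Ioi 0)
    (g : ℝ → ℝ≥0∞) : ∫⁻ r in s, g r ∂rdr = ∫⁻ r in s, ENNReal.ofReal r * g r := by
  rw [rdr, setLIntegral_withDensity_eq_setLIntegral_mul_non_measurable _
    ENNReal.measurable_ofReal g hs (.of_forall fun _ => ENNReal.ofReal_lt_top),
    Measure.restrict_restrict hs, inter_eq_left.2 hsub]
  rfl

theorem ae_rdr_pos : ∀ᵐ r ∂rdr, 0 < r :=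
  (withDensity_absolutelyContinuous _ _).ae_le (ae_restrict_mem measurableSet_Ioi)

theorem rdr_Ioc_le (r : ℝ) : rdr (Ioc 0 r) ≤ ENNReal.ofReal r ^ 2 := by
  rw [← setLIntegral_one, setLIntegral_rdr measurableSet_Ioc fun _ h => h.1]
  calc ∫⁻ s in Ioc 0 r, ENNReal.ofReal s * 1 ≤ ∫⁻ _ in Ioc 0 r, ENNReal.ofReal r :=
        setLIntegral_mono measurable_const fun s hs => by
          rw [mul_one]; exact ENNReal.ofReal_le_ofReal hs.2
    _ = ENNReal.ofReal r ^ 2 := by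
        rw [setLIntegral_const, Real.volume_Ioc, sub_zero, sq]

theorem ENNReal.ofReal_mul_ofReal_rpow {r : ℝ} (hr : 0 < r) (γ : ℝ) :
    ENNReal.ofReal r * ENNReal.ofReal r ^ γ = ENNReal.ofReal (r ^ (γ + 1)) := by
  rw [ENNReal.ofReal_rpow_of_pos hr, ← ENNReal.ofReal_mul hr.le, Real.rpow_add hr,
    Real.rpow_one, mul_comm]

theorem setLIntegral_rdr_Ioc_rpow {γ : ℝ} (hγ : -2 < γ) {R : ℝ} (hR : 0 < R) :
    ∫⁻ r in Ioc 0 R, ENNReal.ofReal r ^ γ ∂rdr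
      = ENNReal.ofReal R ^ (γ + 2) / ENNReal.ofReal (γ + 2) := by
  rw [setLIntegral_rdr measurableSet_Ioc fun _ h => h.1,
    setLIntegral_congr_fun measurableSet_Ioc fun r hr => ENNReal.ofReal_mul_ofReal_rpow hr.1 γ,
    ← ofReal_integral_eq_lintegral_ofReal, ← intervalIntegral.integral_of_le hR.le,
    integral_rpow (Or.inl (by linarith)), Real.zero_rpow (by linarith), sub_zero,
    ENNReal.ofReal_div_of_pos (by linarith), ← ENNReal.ofReal_rpow_of_pos hR]
  · ring_nf
  · exact (intervalIntegrable_iff_integrableOn_Ioc_of_le hR.le).1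
      (intervalIntegral.intervalIntegrable_rpow' (by linarith))
  · exact ae_restrict_of_forall_mem measurableSet_Ioc fun r hr => Real.rpow_nonneg hr.1.le _

theorem setLIntegral_rdr_Ioi_rpow {γ : ℝ} (hγ : γ < -2) {R : ℝ} (hR : 0 < R) :
    ∫⁻ r in Ioi R, ENNReal.ofReal r ^ γ ∂rdr
      = ENNReal.ofReal R ^ (γ + 2) / ENNReal.ofReal (-(γ + 2)) := by
  rw [setLIntegral_rdr measurableSet_Ioi fun _ h => hR.trans h,
    setLIntegral_congr_fun measurableSet_Ioi fun r hr =>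
      ENNReal.ofReal_mul_ofReal_rpow (hR.trans hr) γ,
    ← ofReal_integral_eq_lintegral_ofReal, integral_Ioi_rpow_of_lt (by linarith) hR,
    neg_div, ← div_neg, ENNReal.ofReal_div_of_pos (by linarith), ← ENNReal.ofReal_rpow_of_pos hR]
  · ring_nf
  · exact integrableOn_Ioi_rpow_of_lt (by linarith) hR
  · exact ae_restrict_of_forall_mem measurableSet_Ioi fun r hr =>
      Real.rpow_nonneg (hR.trans hr).le _

theorem lintegral_rdr_le_of_rpow_bounds {g : ℝ → ℝ≥0∞} {γ δ : ℝ} (hγ : -2 < γ) (hδ : δ < -2)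
    {a b : ℝ≥0∞} {R : ℝ} (hR : 0 < R)
    (h_small : ∀ r ∈ Ioc 0 R, g r ≤ a * ENNReal.ofReal r ^ γ)
    (h_large : ∀ r ∈ Ioi R, g r ≤ b * ENNReal.ofReal r ^ δ) :
    ∫⁻ r, g r ∂rdr ≤ a * ENNReal.ofReal R ^ (γ + 2) / ENNReal.ofReal (γ + 2)
      + b * ENNReal.ofReal R ^ (δ + 2) / ENNReal.ofReal (-(δ + 2)) := by
  have h_meas : ∀ ε : ℝ, Measurable fun r : ℝ => ENNReal.ofReal r ^ ε := fun ε => by fun_prop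
  rw [← Measure.restrict_eq_self_of_ae_mem (s := Ioi 0) ae_rdr_pos,
    ← Ioc_union_Ioi_eq_Ioi hR.le]
  refine (lintegral_union_le _ _ _).trans (add_le_add ?_ ?_)
  · refine (setLIntegral_mono' measurableSet_Ioc h_small).trans_eq ?_
    rw [lintegral_const_mul _ (h_meas γ), setLIntegral_rdr_Ioc_rpow hγ hR, mul_div_assoc]
  · refine (setLIntegral_mono' measurableSet_Ioi h_large).trans_eq ?_
    rw [lintegral_const_mul _ (h_meas δ), setLIntegral_rdr_Ioi_rpow hδ hR, mul_div_assoc]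

theorem ENNReal.exists_ofReal_rpow_eq {u : ℝ≥0∞} (hu₀ : u ≠ 0) (hu : u ≠ ⊤) {s : ℝ}
    (hs : s ≠ 0) :
    ∃ R > 0, ENNReal.ofReal R ^ s = u := by
  refine ⟨(u ^ s⁻¹).toReal, ENNReal.toReal_pos ?_ ?_, ?_⟩
  · simp [hu₀, hu]
  · simp [hu₀, hu]
  · rw [ENNReal.ofReal_toReal (by simp [hu₀, hu]), ← ENNReal.rpow_mul, inv_mul_cancel₀ hs,
      ENNReal.rpow_one]

theorem lintegral_rdr_le_of_le_min_rpow {g : ℝ → ℝ≥0∞} {t : ℝ} (ht : 1 < t) {a b : ℝ≥0∞}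
    (ha₀ : a ≠ 0) (ha : a ≠ ⊤) (hb₀ : b ≠ 0) (hb : b ≠ ⊤)
    (h_large : ∀ r > 0, g r ≤ a ^ (2 * t) * ENNReal.ofReal r ^ (-(2 * t)))
    (h_small : ∀ r > 0, g r ≤ b ^ (2 * t) * ENNReal.ofReal r ^ (2 * t - 4)) :
    ∫⁻ r, g r ∂rdr ≤ (a * b) ^ t / ENNReal.ofReal (t - 1) := by
  have ht₀ : 0 < t := by linarith
  set u := a ^ t
  set v := b ^ t
  have hu₀ : u ≠ 0 := (ENNReal.rpow_pos (pos_iff_ne_zero.2 ha₀) ha).ne'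
  have hu : u ≠ ⊤ := ENNReal.rpow_ne_top_of_nonneg ht₀.le ha
  have hv₀ : v ≠ 0 := (ENNReal.rpow_pos (pos_iff_ne_zero.2 hb₀) hb).ne'
  have hv : v ≠ ⊤ := ENNReal.rpow_ne_top_of_nonneg ht₀.le hb
  have hau : a ^ (2 * t) = u * u := by rw [mul_comm, ENNReal.rpow_mul, ENNReal.rpow_two, sq]
  have hbv : b ^ (2 * t) = v * v := by rw [mul_comm, ENNReal.rpow_mul, ENNReal.rpow_two, sq]
  -- the split point is where the two bounds cross
  obtain ⟨R, hR, hRu⟩ := ENNReal.exists_ofReal_rpow_eq (u := u / v)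
    (ENNReal.div_pos hu₀ hv).ne' (ENNReal.div_lt_top hu hv₀).ne (s := 2 * t - 2) (by linarith)
  have hRv : ENNReal.ofReal R ^ (-(2 * t - 2)) = v / u := by
    rw [ENNReal.rpow_neg, hRu, ENNReal.inv_div (Or.inl hv) (Or.inl hv₀)]
  calc ∫⁻ r, g r ∂rdr
      ≤ b ^ (2 * t) * ENNReal.ofReal R ^ (2 * t - 4 + 2) / ENNReal.ofReal (2 * t - 4 + 2)
        + a ^ (2 * t) * ENNReal.ofReal R ^ (-(2 * t) + 2)
          / ENNReal.ofReal (-(-(2 * t) + 2)) :=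
      lintegral_rdr_le_of_rpow_bounds (by linarith) (by linarith) hR
        (fun r hr => h_small r hr.1) (fun r hr => h_large r (hR.trans hr))
    _ = 2 * (u * v) / (2 * ENNReal.ofReal (t - 1)) := by
      rw [show 2 * t - 4 + 2 = 2 * t - 2 by ring, show -(2 * t) + 2 = -(2 * t - 2) by ring,
        neg_neg, hRu, hRv, hau, hbv, mul_assoc, ENNReal.mul_div_cancel hv₀ hv,
        mul_assoc, ENNReal.mul_div_cancel hu₀ hu, ENNReal.div_add_div_same, mul_comm v u,
        ← two_mul, show 2 * t - 2 = 2 * (t - 1) by ring, ENNReal.ofReal_mul zero_le_two,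
        ENNReal.ofReal_ofNat]
    _ = (a * b) ^ t / ENNReal.ofReal (t - 1) := by
      rw [ENNReal.mul_div_mul_left _ _ two_ne_zero ENNReal.ofNat_ne_top,
        ENNReal.mul_rpow_of_nonneg _ _ ht₀.le]

noncomputable def Atheta (ρ : ℝ → ℝ) (r : ℝ) : ℝ :=
  -(1/2 : ℝ) * ∫ s in Ioc (0:ℝ) r, ρ s * s

noncomputable def radialMass (ρ : ℝ → ℝ) (r : ℝ) : ℝ≥0∞ :=
  ∫⁻ s in Ioc 0 r, ‖ρ s‖ₑ ∂rdr

section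

variable {ρ : ℝ → ℝ}

theorem enorm_integral_mul_id_le_radialMass (r : ℝ) :
    ‖∫ s in Ioc (0:ℝ) r, ρ s * s‖ₑ ≤ radialMass ρ r := by
  refine (enorm_integral_le_lintegral_enorm _).trans_eq ?_
  rw [radialMass, setLIntegral_rdr measurableSet_Ioc fun _ h => h.1]
  refine setLIntegral_congr_fun measurableSet_Ioc fun s hs => ?_
  rw [enorm_mul, Real.enorm_eq_ofReal hs.1.le, mul_comm]

theorem enorm_Atheta_sq_div_sq_le {r : ℝ} (hr : 0 < r) :
    ‖Atheta ρ r ^ 2 / r ^ 2‖ₑ ≤ (radialMass ρ r / ENNReal.ofReal r) ^ 2 := by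
  rw [← div_pow, enorm_pow, Real.enorm_eq_ofReal_abs, abs_div, abs_of_pos hr,
    ENNReal.ofReal_div_of_pos hr, ← Real.enorm_eq_ofReal_abs]
  gcongr
  calc ‖Atheta ρ r‖ₑ ≤ ‖∫ s in Ioc (0:ℝ) r, ρ s * s‖ₑ := by
        rw [Atheta, enorm_mul]
        refine mul_le_of_le_one_left' ?_
        norm_num [← ofReal_norm]
    _ ≤ radialMass ρ r := enorm_integral_mul_id_le_radialMass r

theorem radialMass_le_eLpNorm_one (r : ℝ) : radialMass ρ r ≤ eLpNorm ρ 1 rdr := by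
  rw [eLpNorm_one_eq_lintegral_enorm]
  exact setLIntegral_le_lintegral _ _

theorem radialMass_div_le_eLpNorm (hρ : AEStronglyMeasurable ρ rdr) {q : ℝ≥0∞} (hq : 1 ≤ q)
    {r : ℝ} (hr : 0 < r) :
    radialMass ρ r / ENNReal.ofReal r
      ≤ eLpNorm ρ q rdr * ENNReal.ofReal r ^ (1 - 2 / q.toReal) := by
  have hx₀ : ENNReal.ofReal r ≠ 0 := by simpa using hr
  have hθ : 0 ≤ 1 - 1 / q.toReal := by
    rcases eq_or_ne q ⊤ with rfl | hq_top
    · simp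
    · have : 1 ≤ q.toReal := by
        simpa using ENNReal.toReal_mono hq_top hq
      rw [sub_nonneg]; exact div_le_one_of_le₀ this (by linarith)
  refine ENNReal.div_le_of_le_mul ?_
  calc radialMass ρ r = eLpNorm ρ 1 (rdr.restrict (Ioc 0 r)) := by
        rw [eLpNorm_one_eq_lintegral_enorm, radialMass]
    _ ≤ eLpNorm ρ q (rdr.restrict (Ioc 0 r))
          * rdr.restrict (Ioc 0 r) univ ^ (1 / (1 : ℝ≥0∞).toReal - 1 / q.toReal) :=
        eLpNorm_le_eLpNorm_mul_rpow_measure_univ hq hρ.restrict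
    _ ≤ eLpNorm ρ q rdr * (ENNReal.ofReal r ^ 2) ^ (1 - 1 / q.toReal) := by
        rw [Measure.restrict_apply_univ, ENNReal.toReal_one, div_one]
        exact mul_le_mul' (eLpNorm_mono_measure ρ Measure.restrict_le_self)
          (ENNReal.rpow_le_rpow (rdr_Ioc_le r) hθ)
    _ = eLpNorm ρ q rdr * ENNReal.ofReal r ^ (1 - 2 / q.toReal) * ENNReal.ofReal r := by
        rw [mul_assoc, ← ENNReal.rpow_two, ← ENNReal.rpow_mul,
          show 2 * (1 - 1 / q.toReal) = 1 - 2 / q.toReal + 1 by ring,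
          ENNReal.rpow_add _ _ hx₀ ENNReal.ofReal_ne_top, ENNReal.rpow_one]

theorem ofReal_Atheta_sq_div_sq_le_eLpNorm_two_sq (hρ : AEStronglyMeasurable ρ rdr)
    {r : ℝ} (hr : 0 < r) :
    ENNReal.ofReal (Atheta ρ r ^ 2 / r ^ 2) ≤ eLpNorm ρ 2 rdr ^ 2 := by
  rw [← Real.enorm_of_nonneg (by positivity)]
  refine (enorm_Atheta_sq_div_sq_le hr).trans (pow_le_pow_left' ?_ 2)
  simpa using radialMass_div_le_eLpNorm hρ one_le_two hr

theorem eLpNorm_top_Atheta_sq_div_sq_le (hρ : AEStronglyMeasurable ρ rdr) :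
    eLpNorm (fun r => Atheta ρ r ^ 2 / r ^ 2) ⊤ rdr ≤ eLpNorm ρ 1 rdr * eLpNorm ρ ⊤ rdr := by
  rw [eLpNorm_exponent_top]
  refine eLpNormEssSup_le_of_ae_enorm_bound ?_
  filter_upwards [ae_rdr_pos] with r hr
  have hx₀ : ENNReal.ofReal r ≠ 0 := by simpa using hr
  calc ‖Atheta ρ r ^ 2 / r ^ 2‖ₑ ≤ (radialMass ρ r / ENNReal.ofReal r) ^ 2 :=
        enorm_Atheta_sq_div_sq_le hr
    _ ≤ eLpNorm ρ 1 rdr / ENNReal.ofReal r * (eLpNorm ρ ⊤ rdr * ENNReal.ofReal r) := by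
        rw [sq]
        gcongr
        · exact radialMass_le_eLpNorm_one r
        · simpa using radialMass_div_le_eLpNorm hρ le_top hr
    _ = eLpNorm ρ 1 rdr * eLpNorm ρ ⊤ rdr := by
        rw [mul_comm (eLpNorm ρ ⊤ rdr), ← mul_assoc,
          ENNReal.div_mul_cancel hx₀ ENNReal.ofReal_ne_top]

theorem eLpNorm_Atheta_sq_div_sq_le (hρ : AEStronglyMeasurable ρ rdr) {p : ℝ≥0∞} (hp : 1 < p)
    (hp_top : p ≠ ⊤) :
    eLpNorm (fun r => Atheta ρ r ^ 2 / r ^ 2) p rdr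
      ≤ (ENNReal.ofReal (p.toReal - 1))⁻¹ ^ (1 / p.toReal)
        * eLpNorm ρ 1 rdr * eLpNorm ρ p rdr := by
  set t := p.toReal
  have ht : 1 < t := by simpa using (ENNReal.toReal_lt_toReal ENNReal.one_ne_top hp_top).2 hp
  have ht₀ : 0 < t := by linarith
  set N₁ := eLpNorm ρ 1 rdr
  set Nₚ := eLpNorm ρ p rdr
  have hC₀ : (ENNReal.ofReal (t - 1))⁻¹ ^ (1 / t) ≠ 0 := by
    simp [ENNReal.rpow_eq_zero_iff, ht₀.le]
  have h_one : ∀ r > 0, radialMass ρ r / ENNReal.ofReal r ≤ N₁ / ENNReal.ofReal r :=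
    fun r _ => ENNReal.div_le_div_right (radialMass_le_eLpNorm_one r) _
  have h_p : ∀ r > 0,
      radialMass ρ r / ENNReal.ofReal r ≤ Nₚ * ENNReal.ofReal r ^ (1 - 2 / t) :=
    fun r hr => radialMass_div_le_eLpNorm hρ hp.le hr
  rcases eq_or_ne (N₁ * Nₚ) 0 with h₀ | h₀
  · have h_ae : (fun r => Atheta ρ r ^ 2 / r ^ 2) =ᵐ[rdr] 0 := by
      filter_upwards [ae_rdr_pos] with r hr
      have hJ : radialMass ρ r / ENNReal.ofReal r = 0 := by
        rcases mul_eq_zero.1 h₀ with h | h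
        · simpa [h] using h_one r hr
        · simpa [h] using h_p r hr
      simpa [hJ] using enorm_Atheta_sq_div_sq_le (ρ := ρ) hr
    rw [eLpNorm_eq_zero_of_ae_zero h_ae]
    exact zero_le
  rcases eq_or_ne (N₁ * Nₚ) ⊤ with h_top | h_top
  · rw [mul_assoc, h_top, ENNReal.mul_top hC₀]
    exact le_top
  obtain ⟨hN₁₀, hNₚ₀⟩ := mul_ne_zero_iff.1 h₀
  obtain ⟨hNₚ, hN₁⟩ : Nₚ ≠ ⊤ ∧ N₁ ≠ ⊤ := by
    simpa [ENNReal.mul_eq_top, hN₁₀, hNₚ₀, not_or] using h_top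
  have h_int : ∫⁻ r, ‖Atheta ρ r ^ 2 / r ^ 2‖ₑ ^ t ∂rdr
      ≤ (N₁ * Nₚ) ^ t / ENNReal.ofReal (t - 1) := by
    refine lintegral_rdr_le_of_le_min_rpow ht hN₁₀ hN₁ hNₚ₀ hNₚ (fun r hr => ?_) (fun r hr => ?_)
    · calc ‖Atheta ρ r ^ 2 / r ^ 2‖ₑ ^ t
          ≤ ((radialMass ρ r / ENNReal.ofReal r) ^ 2) ^ t :=
            ENNReal.rpow_le_rpow (enorm_Atheta_sq_div_sq_le hr) ht₀.le
        _ ≤ ((N₁ / ENNReal.ofReal r) ^ 2) ^ t :=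
            ENNReal.rpow_le_rpow (pow_le_pow_left' (h_one r hr) 2) ht₀.le
        _ = N₁ ^ (2 * t) * ENNReal.ofReal r ^ (-(2 * t)) := by
            rw [← ENNReal.rpow_two, ← ENNReal.rpow_mul, div_eq_mul_inv,
              ENNReal.mul_rpow_of_nonneg _ _ (by positivity), ← ENNReal.rpow_neg_one,
              ← ENNReal.rpow_mul]
            ring_nf
    · calc ‖Atheta ρ r ^ 2 / r ^ 2‖ₑ ^ t
          ≤ ((radialMass ρ r / ENNReal.ofReal r) ^ 2) ^ t :=
            ENNReal.rpow_le_rpow (enorm_Atheta_sq_div_sq_le hr) ht₀.le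
        _ ≤ ((Nₚ * ENNReal.ofReal r ^ (1 - 2 / t)) ^ 2) ^ t :=
            ENNReal.rpow_le_rpow (pow_le_pow_left' (h_p r hr) 2) ht₀.le
        _ = Nₚ ^ (2 * t) * ENNReal.ofReal r ^ (2 * t - 4) := by
            rw [← ENNReal.rpow_two, ← ENNReal.rpow_mul,
              ENNReal.mul_rpow_of_nonneg _ _ (by positivity), ← ENNReal.rpow_mul]
            congr 2
            field_simp
            ring
  rw [eLpNorm_eq_lintegral_rpow_enorm_toReal (by positivity) hp_top]
  calc (∫⁻ r, ‖Atheta ρ r ^ 2 / r ^ 2‖ₑ ^ t ∂rdr) ^ (1 / t)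
      ≤ ((N₁ * Nₚ) ^ t / ENNReal.ofReal (t - 1)) ^ (1 / t) :=
        ENNReal.rpow_le_rpow h_int (by positivity)
    _ = (ENNReal.ofReal (t - 1))⁻¹ ^ (1 / t) * N₁ * Nₚ := by
        rw [div_eq_mul_inv, ENNReal.mul_rpow_of_nonneg _ _ (by positivity),
          ← ENNReal.rpow_mul, mul_one_div_cancel ht₀.ne', ENNReal.rpow_one, mul_comm, mul_assoc]

end

/-- With `A_θ(r) = -(1/2)∫_0^r ρ(s) s ds`: for `1 < p ≤ ∞`,
`‖A_θ²/r²‖_{L^p(ℝ²)} ≤ C_p ‖ρ‖_{L¹(ℝ²)} ‖ρ‖_{L^p(ℝ²)}`, and moreover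
`‖A_θ²/r²‖_{L^∞} ≤ C ‖ρ‖_{L²(ℝ²)}²` for a universal constant `C`. -/
theorem Atheta_sq_over_r_sq_bounds :
    (∀ p : ℝ≥0∞, 1 < p → ∃ C : ℝ≥0∞, C ≠ ⊤ ∧ ∀ ρ : ℝ → ℝ, Measurable ρ → (∀ s, 0 ≤ ρ s) →
      eLpNorm (fun r => ((-(1/2 : ℝ)) * ∫ s in Ioc (0:ℝ) r, ρ s * s)^2 / r^2) p rdr
        ≤ C * eLpNorm ρ 1 rdr * eLpNorm ρ p rdr) ∧
    (∃ C : ℝ≥0∞, C ≠ ⊤ ∧ ∀ ρ : ℝ → ℝ, Measurable ρ → (∀ s, 0 ≤ ρ s) → ∀ r : ℝ, 0 < r →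
      ENNReal.ofReal (((-(1/2 : ℝ)) * ∫ s in Ioc (0:ℝ) r, ρ s * s)^2 / r^2)
        ≤ C * (eLpNorm ρ 2 rdr)^2) := by
  refine ⟨fun p hp => ?_, ⟨1, ENNReal.one_ne_top, fun ρ hρ _ r hr => ?_⟩⟩
  · rcases eq_or_ne p ⊤ with rfl | hp_top
    · refine ⟨1, ENNReal.one_ne_top, fun ρ hρ _ => ?_⟩
      rw [one_mul]
      exact eLpNorm_top_Atheta_sq_div_sq_le hρ.aestronglyMeasurable
    · have ht : 1 < p.toReal := by
        simpa using (ENNReal.toReal_lt_toReal ENNReal.one_ne_top hp_top).2 hp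
      refine ⟨_, ?_, fun ρ hρ _ => eLpNorm_Atheta_sq_div_sq_le hρ.aestronglyMeasurable hp hp_top⟩
      exact ENNReal.rpow_ne_top_of_nonneg (by positivity) (by simpa using ht)
  · rw [one_mul]
    exact ofReal_Atheta_sq_div_sq_le_eLpNorm_two_sq hρ.aestronglyMeasurable hr
end
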